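/- For a twice continuously differentiable function Ḡ: (0,∞) → ℝ with Ḡ'' = g continuous, and any two points F₀, F > 0, one has Ḡ(F) - Ḡ(F₀) = Ḡ'(F₀)(F - F₀) + ∫₀^{F₀} g(k)·max(k - F, 0) dk + ∫_{F₀}^∞ g(k)·max(F - k, 0) dk, provided the integrals converge (e.g., g has compact support or the payoff-weighted integrals are finite). -/

import Mathlib

/-!
Taylor's formula with integral remainder gives
`G F - G F₀ - G' F₀ (F - F₀) = ∫_{F₀}^{F} g k (F - k) dk`.
If `F₀ ≤ F`, the put payoff `(k - F)⁺` vanishes on `[0, F₀]` and the call payoff `(F - k)⁺` beyond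
`F₀` restricts the call integral to `[F₀, F]`, where it is this remainder.  If `F < F₀`, the call
integral vanishes and the put integral is the same remainder taken over `[F, F₀]`.
-/

open MeasureTheory Set

theorem integral_mul_sub_eq_sub_sub_deriv_mul {G G' g : ℝ → ℝ} {a b : ℝ}
    (hG : ∀ x ∈ uIcc a b, HasDerivAt G (G' x) x) (hG' : ∀ x ∈ uIcc a b, HasDerivAt G' (g x) x)
    (hg : IntervalIntegrable g volume a b) :
    ∫ k in a..b, g k * (b - k) = G b - G a - G' a * (b - a) := by
  have hderiv : ∀ x ∈ uIcc a b, HasDerivAt (fun k => G' k * (b - k) + G k) (g x * (b - x)) x := by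
    intro x hx
    have h := ((hG' x hx).mul ((hasDerivAt_id x).const_sub b)).add (hG x hx)
    exact h.congr_deriv (by simp)
  rw [intervalIntegral.integral_eq_sub_of_hasDerivAt hderiv
    (hg.mul_continuousOn (continuousOn_const.sub continuousOn_id))]
  ring

section Payoffs

variable (f : ℝ → ℝ) {a b c : ℝ}

theorem integral_Ioi_mul_max_sub_eq_zero (h : c ≤ a) :
    ∫ k in Ioi a, f k * max (c - k) 0 = 0 := by
  refine setIntegral_eq_zero_of_forall_eq_zero fun k hk => ?_
  rw [max_eq_right (by linarith [mem_Ioi.1 hk]), mul_zero]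

theorem integral_Ioi_mul_max_sub_of_le (h : a ≤ c) :
    ∫ k in Ioi a, f k * max (c - k) 0 = ∫ k in a..c, f k * (c - k) := by
  rw [intervalIntegral.integral_of_le h,
    setIntegral_eq_of_subset_of_forall_sdiff_eq_zero measurableSet_Ioi Ioc_subset_Ioi_self]
  · refine setIntegral_congr_fun measurableSet_Ioc fun k hk => ?_
    rw [max_eq_left (sub_nonneg.2 hk.2)]
  · intro k hk
    have hck : c < k := lt_of_not_ge fun hkc => hk.2 ⟨hk.1, hkc⟩
    rw [max_eq_right (by linarith), mul_zero]

theorem intervalIntegral_mul_max_sub_eq_zero (ha : a ≤ c) (hb : b ≤ c) :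
    ∫ k in a..b, f k * max (k - c) 0 = 0 := by
  refine (intervalIntegral.integral_congr fun k hk => ?_).trans intervalIntegral.integral_zero
  have hkc : k ≤ c := hk.2.trans (max_le ha hb)
  simp only [max_eq_right (sub_nonpos.2 hkc), mul_zero]

theorem intervalIntegral_mul_max_sub_of_le (hac : a ≤ c) (hcb : c ≤ b) :
    ∫ k in a..b, f k * max (k - c) 0 = ∫ k in c..b, f k * (k - c) := by
  rw [intervalIntegral.integral_of_le (hac.trans hcb), intervalIntegral.integral_of_le hcb,
    setIntegral_eq_of_subset_of_forall_sdiff_eq_zero measurableSet_Ioc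
      (Ioc_subset_Ioc_left hac)]
  · refine setIntegral_congr_fun measurableSet_Ioc fun k hk => ?_
    rw [max_eq_left (sub_nonneg.2 hk.1.le)]
  · intro k hk
    have hkc : k ≤ c := le_of_not_gt fun hck => hk.2 ⟨hck, hk.1.2⟩
    rw [max_eq_right (sub_nonpos.2 hkc), mul_zero]

end Payoffs

theorem stmt0_general (G g G' : ℝ → ℝ)
    (hG' : ∀ x ∈ Set.Ioi (0:ℝ), HasDerivAt G (G' x) x)
    (hG'' : ∀ x ∈ Set.Ioi (0:ℝ), HasDerivAt G' (g x) x)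
    (hg : ContinuousOn g (Set.Ioi 0))
    (F₀ F : ℝ) (hF₀ : 0 < F₀) (hF : 0 < F) :
    G F - G F₀ = G' F₀ * (F - F₀)
      + (∫ k in (0:ℝ)..F₀, g k * max (k - F) 0)
      + ∫ k in Set.Ioi F₀, g k * max (F - k) 0 := by
  have hpos : uIcc F₀ F ⊆ Ioi 0 := fun x hx => (lt_min hF₀ hF).trans_le hx.1
  have taylor := integral_mul_sub_eq_sub_sub_deriv_mul (fun x hx => hG' x (hpos hx))
    (fun x hx => hG'' x (hpos hx)) ((hg.mono hpos).intervalIntegrable)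
  rcases le_total F₀ F with hle | hle
  · rw [intervalIntegral_mul_max_sub_eq_zero g hF.le hle, integral_Ioi_mul_max_sub_of_le g hle,
      taylor]
    ring
  · rw [intervalIntegral_mul_max_sub_of_le g hF.le hle, integral_Ioi_mul_max_sub_eq_zero g hle,
      intervalIntegral.integral_symm, ← intervalIntegral.integral_neg]
    simp_rw [← mul_neg, neg_sub]
    rw [taylor]
    ring

theorem stmt0 (G g G' : ℝ → ℝ)
    (hG' : ∀ x ∈ Set.Ioi (0:ℝ), HasDerivAt G (G' x) x)
    (hG'' : ∀ x ∈ Set.Ioi (0:ℝ), HasDerivAt G' (g x) x)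
    (hg : ContinuousOn g (Set.Ioi 0))
    (F₀ F : ℝ) (hF₀ : 0 < F₀) (hF : 0 < F)
    (hint1 : IntervalIntegrable (fun k => g k * max (k - F) 0) volume 0 F₀)
    (hint2 : IntegrableOn (fun k => g k * max (F - k) 0) (Set.Ioi F₀)) :
    G F - G F₀ = G' F₀ * (F - F₀)
      + (∫ k in (0:ℝ)..F₀, g k * max (k - F) 0)
      + ∫ k in Set.Ioi F₀, g k * max (F - k) 0 :=
  stmt0_general G g G' hG' hG'' hg F₀ F hF₀ hF
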